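/- Let a, b ≥ 2 be integers with a + b = n. Then λ(K⁺_{a,b}) ≤ λ(K⁺_{⌊n/2⌋,⌈n/2⌉}), and equality holds if and only if a = ⌊n/2⌋ and b = ⌈n/2⌉. -/

import Mathlib

/-!
The spectral radius of `K⁺_{a,b}` is the unique root `μ > 1` of
`f_{a,b}(x) = x³ - x² - abx + (a-2)b`: for any such root there is an explicit positive eigenvector,
and a positive eigenvector of a nonnegative symmetric matrix belongs to the spectral radius
(pair it with `|v|` for any other eigenvector `v`).

If `a + b = a₀ + b₀` then `f_{a,b} - f_{a₀,b₀} = (b - b₀)((b - a₀)(x - 1) - 2)`, which is positive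
at `μ₀ = λ(K⁺_{a₀,b₀})` for the balanced `(a₀, b₀)` unless `(a, b) = (a₀, b₀)`. As `f_{a,b}(1) < 0`,
`f_{a,b}` then has a root in `(1, μ₀)`, which must be `λ(K⁺_{a,b})`.
-/

open SimpleGraph

/-- The spectral radius (largest adjacency eigenvalue) of a finite simple graph. -/
noncomputable def specRad {V : Type*} [Fintype V] (G : SimpleGraph V) : ℝ :=
  letI : DecidableEq V := Classical.decEq V
  letI : DecidableRel G.Adj := Classical.decRel _
  sSup (spectrum ℝ (G.adjMatrix ℝ))

/-- `KplusAB a b` : the complete bipartite graph `K_{a,b}` with one extra edge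
(between vertices `0` and `1`) inside the part of size `a`. -/
def KplusAB (a b : ℕ) : SimpleGraph (Fin a ⊕ Fin b) where
  Adj x y :=
    match x, y with
    | .inl i, .inl j => (i.val = 0 ∧ j.val = 1) ∨ (i.val = 1 ∧ j.val = 0)
    | .inl _, .inr _ => True
    | .inr _, .inl _ => True
    | .inr _, .inr _ => False
  symm := by constructor; rintro (i | i) (j | j) h <;> simp_all <;> tauto
  loopless := by constructor; rintro (i | i) h <;> simp_all <;> omega

open Matrix

theorem Matrix.mem_spectrum_iff_exists_mulVec_eq_smul {n K : Type*} [Fintype n] [DecidableEq n]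
    [Field K] (A : Matrix n n K) (μ : K) :
    μ ∈ spectrum K A ↔ ∃ v ≠ 0, A *ᵥ v = μ • v := by
  rw [← spectrum_toLin', ← Module.End.hasEigenvalue_iff_mem_spectrum]
  constructor
  · intro h
    obtain ⟨v, hv⟩ := h.exists_hasEigenvector
    exact ⟨v, hv.2, by simpa using hv.apply_eq_smul⟩
  · rintro ⟨v, hv, hAv⟩
    exact Module.End.hasEigenvalue_of_hasEigenvector
      (Module.End.hasEigenvector_iff.2 ⟨by simpa [Module.End.mem_eigenspace_iff] using hAv, hv⟩)

theorem Matrix.abs_le_of_mem_spectrum_of_pos_eigenvector {n : Type*} [Fintype n] [DecidableEq n]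
    {M : Matrix n n ℝ} (hM : ∀ i j, 0 ≤ M i j) (hsymm : M.IsSymm) {w : n → ℝ} {μ θ : ℝ}
    (hw : ∀ i, 0 < w i) (hMw : M *ᵥ w = μ • w) (hθ : θ ∈ spectrum ℝ M) : |θ| ≤ μ := by
  obtain ⟨v, hv, hMv⟩ := (M.mem_spectrum_iff_exists_mulVec_eq_smul θ).1 hθ
  set u : n → ℝ := fun i => |v i|
  have hu : 0 ≤ u := fun i => abs_nonneg _
  have hMu : |θ| • u ≤ M *ᵥ u := fun i => by
    calc |θ| * |v i| = |∑ j, M i j * v j| := by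
          rw [← abs_mul, ← smul_eq_mul, ← Pi.smul_apply, ← hMv]; rfl
      _ ≤ ∑ j, |M i j * v j| := Finset.abs_sum_le_sum_abs _ _
      _ = (M *ᵥ u) i := by simp [mulVec, dotProduct, abs_mul, abs_of_nonneg (hM i _), u]
  have hwu : 0 < w ⬝ᵥ u := by
    obtain ⟨i, hi⟩ := Function.ne_iff.1 hv
    exact Finset.sum_pos' (fun j _ => mul_nonneg (hw j).le (hu j))
      ⟨i, Finset.mem_univ _, mul_pos (hw i) (abs_pos.2 hi)⟩
  have : |θ| * (w ⬝ᵥ u) ≤ μ * (w ⬝ᵥ u) := by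
    calc |θ| * (w ⬝ᵥ u) = w ⬝ᵥ (|θ| • u) := by rw [dotProduct_smul, smul_eq_mul]
      _ ≤ w ⬝ᵥ (M *ᵥ u) := dotProduct_le_dotProduct_of_nonneg_left hMu fun i => (hw i).le
      _ = μ * (w ⬝ᵥ u) := by
          rw [dotProduct_mulVec, ← mulVec_transpose, hsymm.eq, hMw, smul_dotProduct, smul_eq_mul]
  exact le_of_mul_le_mul_right this hwu

theorem Matrix.sSup_spectrum_eq_of_pos_eigenvector {n : Type*} [Fintype n] [DecidableEq n]
    [Nonempty n] {M : Matrix n n ℝ} (hM : ∀ i j, 0 ≤ M i j) (hsymm : M.IsSymm) {w : n → ℝ} {μ : ℝ}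
    (hw : ∀ i, 0 < w i) (hMw : M *ᵥ w = μ • w) : sSup (spectrum ℝ M) = μ := by
  refine IsGreatest.csSup_eq ⟨(M.mem_spectrum_iff_exists_mulVec_eq_smul μ).2 ⟨w, ?_, hMw⟩,
    fun θ hθ => (le_abs_self θ).trans (abs_le_of_mem_spectrum_of_pos_eigenvector hM hsymm hw hMw hθ)⟩
  exact Function.ne_iff.2 ⟨Classical.arbitrary n, (hw _).ne'⟩

namespace KplusAB

@[simp] theorem adj_inl_inl {a b : ℕ} {i j : Fin a} :
    (KplusAB a b).Adj (.inl i) (.inl j) ↔ (i : ℕ) = 0 ∧ (j : ℕ) = 1 ∨ (i : ℕ) = 1 ∧ (j : ℕ) = 0 :=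
  Iff.rfl

@[simp] theorem adj_inl_inr {a b : ℕ} {i : Fin a} {j : Fin b} :
    (KplusAB a b).Adj (.inl i) (.inr j) := trivial

@[simp] theorem adj_inr_inl {a b : ℕ} {i : Fin b} {j : Fin a} :
    (KplusAB a b).Adj (.inr i) (.inl j) := trivial

@[simp] theorem not_adj_inr_inr {a b : ℕ} {i j : Fin b} :
    ¬(KplusAB a b).Adj (.inr i) (.inr j) := id

/-- The characteristic polynomial of the quotient matrix of the equitable partition
{the two ends of the extra edge, the rest of the `a`-part, the `b`-part}. -/
def cubic (a b : ℕ) (x : ℝ) : ℝ := x ^ 3 - x ^ 2 - a * b * x + (a - 2) * b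

noncomputable def perronVec (a b : ℕ) (μ : ℝ) : Fin a ⊕ Fin b → ℝ :=
  Sum.elim (fun i => if (i : ℕ) ≤ 1 then b * μ else b * (μ - 1)) fun _ => μ * (μ - 1)

theorem perronVec_pos {a b : ℕ} (hb : 0 < b) {μ : ℝ} (hμ : 1 < μ) (x : Fin a ⊕ Fin b) :
    0 < perronVec a b μ x := by
  have : (0 : ℝ) < b := by exact_mod_cast hb
  rcases x with i | j
  · simp only [perronVec, Sum.elim_inl]
    split_ifs <;> nlinarith
  · simp only [perronVec, Sum.elim_inr]
    nlinarith

theorem adjMatrix_mulVec_perronVec {a b : ℕ} [DecidableRel (KplusAB a b).Adj] (ha : 2 ≤ a)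
    {μ : ℝ} (hμ : cubic a b μ = 0) :
    (KplusAB a b).adjMatrix ℝ *ᵥ perronVec a b μ = μ • perronVec a b μ := by
  obtain ⟨a, rfl⟩ := Nat.exists_eq_add_of_le' ha
  ext (i | j)
  · refine Fin.cases ?_ (Fin.cases ?_ fun k => ?_) i <;>
      simp [mulVec, dotProduct, Fintype.sum_sum_type, Fin.sum_univ_succ, perronVec,
        adjMatrix_apply] <;> ring
  · simp [mulVec, dotProduct, Fintype.sum_sum_type, Fin.sum_univ_succ, perronVec, adjMatrix_apply]
    unfold cubic at hμ
    push_cast at hμ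
    linear_combination -hμ

theorem specRad_eq_of_cubic_eq_zero {a b : ℕ} (ha : 2 ≤ a) (hb : 0 < b) {μ : ℝ} (hμ1 : 1 < μ)
    (hμ : cubic a b μ = 0) : specRad (KplusAB a b) = μ := by
  have : Nonempty (Fin a ⊕ Fin b) := ⟨.inl ⟨0, by omega⟩⟩
  let _ := Classical.decEq (Fin a ⊕ Fin b)
  let _ := Classical.decRel (KplusAB a b).Adj
  refine sSup_spectrum_eq_of_pos_eigenvector (fun i j => ?_) (isSymm_adjMatrix _)
    (perronVec_pos hb hμ1) (adjMatrix_mulVec_perronVec ha hμ)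
  rw [adjMatrix_apply]
  split_ifs <;> norm_num

theorem exists_cubic_eq_zero_mem_Ioo {a b : ℕ} {lo hi : ℝ} (hle : lo ≤ hi)
    (hlo : cubic a b lo < 0) (hhi : 0 < cubic a b hi) : ∃ ρ ∈ Set.Ioo lo hi, cubic a b ρ = 0 :=
  intermediate_value_Ioo hle (by unfold cubic; fun_prop) ⟨hlo, hhi⟩

theorem cubic_one_neg {a b : ℕ} (hb : 0 < b) : cubic a b 1 < 0 := by
  have : (0 : ℝ) < b := by exact_mod_cast hb
  unfold cubic
  linarith

theorem exists_cubic_eq_zero_gt {a b : ℕ} (ha : 2 ≤ a) {lo : ℝ} (hlo : 1 ≤ lo)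
    (h : cubic a b lo < 0) : ∃ ρ, lo < ρ ∧ cubic a b ρ = 0 := by
  have ha' : (2 : ℝ) ≤ a := by exact_mod_cast ha
  have hab : (0 : ℝ) ≤ a * b := by positivity
  have hhi : 0 < cubic a b (lo + a * b + 1) := by
    unfold cubic
    nlinarith [mul_nonneg (sub_nonneg.2 ha') (Nat.cast_nonneg (α := ℝ) b)]
  obtain ⟨ρ, ⟨hρlo, -⟩, hρ⟩ := exists_cubic_eq_zero_mem_Ioo (by linarith) h hhi
  exact ⟨ρ, hρlo, hρ⟩

theorem lt_specRad_of_cubic_neg {a b : ℕ} (ha : 2 ≤ a) (hb : 0 < b) {lo : ℝ} (hlo : 1 ≤ lo)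
    (h : cubic a b lo < 0) : lo < specRad (KplusAB a b) := by
  obtain ⟨ρ, hρlo, hρ⟩ := exists_cubic_eq_zero_gt ha hlo h
  rwa [specRad_eq_of_cubic_eq_zero ha hb (by linarith) hρ]

theorem one_lt_specRad {a b : ℕ} (ha : 2 ≤ a) (hb : 0 < b) : 1 < specRad (KplusAB a b) :=
  lt_specRad_of_cubic_neg ha hb le_rfl (cubic_one_neg hb)

theorem cubic_specRad_eq_zero {a b : ℕ} (ha : 2 ≤ a) (hb : 0 < b) :
    cubic a b (specRad (KplusAB a b)) = 0 := by
  obtain ⟨ρ, hρ1, hρ⟩ := exists_cubic_eq_zero_gt ha le_rfl (cubic_one_neg (a := a) hb)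
  rwa [specRad_eq_of_cubic_eq_zero ha hb hρ1 hρ]

theorem specRad_lt_of_cubic_pos {a b : ℕ} (ha : 2 ≤ a) (hb : 0 < b) {hi : ℝ} (hhi : 1 < hi)
    (h : 0 < cubic a b hi) : specRad (KplusAB a b) < hi := by
  obtain ⟨ρ, ⟨hρ1, hρhi⟩, hρ⟩ := exists_cubic_eq_zero_mem_Ioo hhi.le (cubic_one_neg hb) h
  rwa [specRad_eq_of_cubic_eq_zero ha hb hρ1 hρ]

theorem cubic_sub_cubic {a b a₀ b₀ : ℕ} (h : a + b = a₀ + b₀) (x : ℝ) :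
    cubic a b x - cubic a₀ b₀ x = (b - b₀) * ((b - a₀) * (x - 1) - 2) := by
  have h' : (a : ℝ) + b = a₀ + b₀ := by exact_mod_cast h
  unfold cubic
  linear_combination (-(b : ℝ) * (x - 1)) * h'

theorem cubic_pos_at_specRad_balanced {a b : ℕ} (ha : 2 ≤ a) (hb : 2 ≤ b)
    (hne : a ≠ (a + b) / 2) :
    0 < cubic a b (specRad (KplusAB ((a + b) / 2) ((a + b + 1) / 2))) := by
  set a₀ := (a + b) / 2
  set b₀ := (a + b + 1) / 2
  set μ₀ := specRad (KplusAB a₀ b₀)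
  have ha₀ : 2 ≤ a₀ := by omega
  have hb₀ : 0 < b₀ := by omega
  have hμ₀ : cubic a₀ b₀ μ₀ = 0 := cubic_specRad_eq_zero ha₀ hb₀
  have hμ₀1 : 1 < μ₀ := one_lt_specRad ha₀ hb₀
  have hdiff := cubic_sub_cubic (a := a) (b := b) (show a + b = a₀ + b₀ by omega) μ₀
  rw [hμ₀, sub_zero] at hdiff
  rw [hdiff]
  rcases lt_or_gt_of_ne (show b ≠ b₀ by omega) with hlt | hgt
  · have h₁ : (b : ℝ) < b₀ := by exact_mod_cast hlt
    have h₂ : (b : ℝ) ≤ a₀ := by exact_mod_cast (show b ≤ a₀ by omega)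
    exact mul_pos_of_neg_of_neg (by linarith) (by nlinarith)
  · -- here `b > b₀ ≥ a₀` only gives `b - a₀ ≥ 1`, so we need `μ₀ > 3`
    have h₁ : (b₀ : ℝ) < b := by exact_mod_cast hgt
    have h₂ : (a₀ : ℝ) + 1 ≤ b := by exact_mod_cast (show a₀ + 1 ≤ b by omega)
    have h₃ : (3 : ℝ) ≤ a₀ := by exact_mod_cast (show 3 ≤ a₀ by omega)
    have h₄ : (3 : ℝ) ≤ b₀ := by exact_mod_cast (show 3 ≤ b₀ by omega)
    have hμ₀3 : 3 < μ₀ := lt_specRad_of_cubic_neg ha₀ hb₀ (by norm_num) (by unfold cubic; nlinarith)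
    exact mul_pos (by linarith) (by nlinarith)

end KplusAB

theorem Kplus_balanced_is_max (a b n : ℕ) (ha : 2 ≤ a) (hb : 2 ≤ b) (hab : a + b = n) :
    specRad (KplusAB a b) ≤ specRad (KplusAB (n / 2) ((n + 1) / 2)) ∧
      (specRad (KplusAB a b) = specRad (KplusAB (n / 2) ((n + 1) / 2)) ↔
        a = n / 2 ∧ b = (n + 1) / 2) := by
  subst hab
  by_cases hbal : a = (a + b) / 2
  · have hbal' : b = (a + b + 1) / 2 := by omega
    rw [← hbal, ← hbal']
    simp
  · have hlt := KplusAB.specRad_lt_of_cubic_pos (by omega) (by omega)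
      (KplusAB.one_lt_specRad (by omega) (by omega)) (KplusAB.cubic_pos_at_specRad_balanced ha hb hbal)
    exact ⟨hlt.le, iff_of_false hlt.ne fun h => hbal h.1⟩
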